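/- There exists a finite set S of size 3, an element s₀ ∈ S, and a function g : S × Fin 3 → S × Fin 3 such that the position component of g^[n](s₀, 0) equals 0 if n ≡ 0 (mod 4), equals 1 if n ≡ 1 or 3 (mod 4), and equals 2 if n ≡ 2 (mod 4) for all n ∈ ℕ; but there is no function h : Fin 3 → Fin 3 such that h^[n](0) equals 0 if n ≡ 0 (mod 4), equals 1 if n ≡ 1 or 3 (mod 4), and equals 2 if n ≡ 2 (mod 4) for all n ∈ ℕ. -/

import Mathlib

/-- The required period-4 position pattern C, C', C'', C', C, … of the Oscillating
Configurations problem, as a predicate on (time, position). -/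
def oscSpec (n : ℕ) (p : Fin 3) : Prop :=
  (n % 4 = 0 → p = 0) ∧ ((n % 4 = 1 ∨ n % 4 = 3) → p = 1) ∧ (n % 4 = 2 → p = 2)

/-!
With memory, the pair (memory, position) can run through a cycle of length 4 in which the
two visits of C' carry different memory values, so the position sequence has period 4.
Without memory the successor of a position is fixed, but C' is followed by C'' at time 2
and by C at time 4.
-/

instance (n : ℕ) (p : Fin 3) : Decidable (oscSpec n p) := by
  unfold oscSpec
  infer_instance

theorem oscSpec_mod_iff {n : ℕ} {p : Fin 3} : oscSpec (n % 4) p ↔ oscSpec n p := by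
  simp only [oscSpec, Nat.mod_mod]

theorem Function.IsPeriodicPt.forall_iterate {α : Type*} {f : α → α} {x : α} {k : ℕ}
    (hx : Function.IsPeriodicPt f k x) (hk : 0 < k) {P : ℕ → α → Prop}
    (hP : ∀ n a, P (n % k) a → P n a) (hinit : ∀ r < k, P r (f^[r] x)) (n : ℕ) :
    P n (f^[n] x) := by
  rw [← hx.iterate_mod_apply]
  exact hP n _ (hinit _ (Nat.mod_lt n hk))

def oscStep : Fin 3 × Fin 3 → Fin 3 × Fin 3
  | (0, 0) => (0, 1)
  | (0, 1) => (0, 2)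
  | (0, 2) => (1, 1)
  | (1, 1) => (0, 0)
  | x => x

theorem isPeriodicPt_oscStep : Function.IsPeriodicPt oscStep 4 (0, 0) := rfl

theorem oscSpec_iterate_oscStep (n : ℕ) : oscSpec n (oscStep^[n] (0, 0)).2 :=
  isPeriodicPt_oscStep.forall_iterate (P := fun n s => oscSpec n s.2) (by norm_num)
    (fun _ _ => oscSpec_mod_iff.mp) (by decide) n

theorem not_exists_memoryless_oscillation :
    ¬ ∃ h : Fin 3 → Fin 3, ∀ n : ℕ, oscSpec n (h^[n] 0) := by
  rintro ⟨h, hspec⟩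
  have h1 : h^[1] 0 = 1 := (hspec 1).2.1 (Or.inl rfl)
  have h3 : h^[3] 0 = 1 := (hspec 3).2.1 (Or.inr rfl)
  have h24 : h^[2] 0 = h^[4] 0 := by
    simp only [Function.iterate_succ_apply' h 1, Function.iterate_succ_apply' h 3, h1, h3]
  rw [(hspec 2).2.2 rfl, (hspec 4).1 rfl] at h24
  exact absurd h24 (by decide)

/-- With a 3-element persistent internal memory the period-4 oscillation of positions
is realizable, but it is not realizable memorylessly (as iteration of a function of
the position alone). -/
theorem finite_memory_oscillation_vs_memoryless :
    (∃ (S : Type) (_ : Fintype S), Fintype.card S = 3 ∧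
      ∃ (s₀ : S) (g : S × Fin 3 → S × Fin 3),
        ∀ n : ℕ, oscSpec n ((g^[n] (s₀, (0 : Fin 3))).2)) ∧
    ¬ ∃ h : Fin 3 → Fin 3, ∀ n : ℕ, oscSpec n (h^[n] 0) :=
  ⟨⟨Fin 3, inferInstance, Fintype.card_fin 3, 0, oscStep, oscSpec_iterate_oscStep⟩,
    not_exists_memoryless_oscillation⟩
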